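/- arXiv:2411.10107 — 2 statements merged into one kernel-verified Lean document; each statement's English description precedes it below -/
import Mathlib

section
/- Let f be a violation-free DMAC instance with unit displacements on G = G1 × G2, and let x, x̃ ∈ G1 with x ≤ x̃ and ‖x̃ − x‖∞ = 1. (a) If y ∈ G2 is a fixed point of the sub-instance f^x, then there exists a fixed point ỹ of f^{x̃} with y ≤ ỹ and ‖ỹ − y‖∞ ≤ 1. (b) If ỹ ∈ G2 is a fixed point of f^{x̃}, then there exists a fixed point y of f^x with y ≤ ỹ and ‖ỹ − y‖∞ ≤ 1. -/
/-- Membership in the grid `{1, …, n}^d ⊆ ℤ^d`. -/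
def inGrid (n : ℕ) {d : ℕ} (x : Fin d → ℤ) : Prop :=
  ∀ i, 1 ≤ x i ∧ x i ≤ (n : ℤ)

/-- The ℓ∞ distance `‖x − y‖∞ = max_i |x_i − y_i|` (as a natural number). -/
def linf {d : ℕ} (x y : Fin d → ℤ) : ℕ :=
  Finset.univ.sup fun i => (x i - y i).natAbs

/-- Membership in the product grid `G1 × G2`. -/
def inGridP (n : ℕ) {d1 d2 : ℕ} (u : (Fin d1 → ℤ) × (Fin d2 → ℤ)) : Prop :=
  inGrid n u.1 ∧ inGrid n u.2

/-- The ℓ∞ distance on the product grid (it is the ℓ∞ distance of the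
concatenated points in `ℤ^{d1+d2}`). -/
def linfP {d1 d2 : ℕ} (u v : (Fin d1 → ℤ) × (Fin d2 → ℤ)) : ℕ :=
  max (linf u.1 v.1) (linf u.2 v.2)

lemma linf_le_iff {d : ℕ} (x y : Fin d → ℤ) (k : ℕ) :
    linf x y ≤ k ↔ ∀ i, (x i - y i).natAbs ≤ k := by
  simp [linf, Finset.sup_le_iff]

lemma linf_comm {d : ℕ} (x y : Fin d → ℤ) : linf x y = linf y x := by
  unfold linf
  congr 1
  funext i
  omega

/-- Monotone iteration upwards in a bounded box terminates in a fixed point. -/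
lemma aux_up (d : ℕ) (g : (Fin d → ℤ) → (Fin d → ℤ)) (c : Fin d → ℤ)
    (S : (Fin d → ℤ) → Prop)
    (hSg : ∀ z, S z → S (g z))
    (hgmono : ∀ z w, S z → S w → z ≤ w → g z ≤ g w)
    (hub : ∀ z, S z → ∀ i, z i ≤ c i) :
    ∀ m z, S z → z ≤ g z → (∑ i, (c i - z i).toNat) ≤ m →
      ∃ w, S w ∧ g w = w ∧ z ≤ w := by
  intro m
  induction m with
  | zero =>
    intro z hz hzg hsum
    refine ⟨z, hz, ?_, le_refl z⟩
    have hsum0 : ∀ i, (c i - z i).toNat = 0 := by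
      intro i
      have := Finset.sum_eq_zero_iff.mp (Nat.le_zero.mp hsum) i (Finset.mem_univ i)
      exact this
    funext i
    have h1 : z i ≤ g z i := hzg i
    have h2 : g z i ≤ c i := hub (g z) (hSg z hz) i
    have h3 := hsum0 i
    omega
  | succ m ih =>
    intro z hz hzg hsum
    by_cases hfix : g z = z
    · exact ⟨z, hz, hfix, le_refl z⟩
    · have hi : ∃ i, z i ≠ g z i := by
        by_contra h
        push_neg at h
        exact hfix (funext fun i => (h i).symm)
      obtain ⟨i, hi⟩ := hi
      have hdec : (∑ j, (c j - g z j).toNat) < ∑ j, (c j - z j).toNat := by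
        apply Finset.sum_lt_sum
        · intro j _
          have : z j ≤ g z j := hzg j
          omega
        · refine ⟨i, Finset.mem_univ i, ?_⟩
          have h1 : z i ≤ g z i := hzg i
          have h2 : g z i ≤ c i := hub (g z) (hSg z hz) i
          omega
      obtain ⟨w, hw, hfw, hgzw⟩ := ih (g z) (hSg z hz)
        (hgmono z (g z) hz (hSg z hz) hzg) (by omega)
      exact ⟨w, hw, hfw, le_trans hzg hgzw⟩

/-- Monotone iteration downwards in a bounded box terminates in a fixed point. -/
lemma aux_down (d : ℕ) (g : (Fin d → ℤ) → (Fin d → ℤ)) (c : Fin d → ℤ)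
    (S : (Fin d → ℤ) → Prop)
    (hSg : ∀ z, S z → S (g z))
    (hgmono : ∀ z w, S z → S w → z ≤ w → g z ≤ g w)
    (hlb : ∀ z, S z → ∀ i, c i ≤ z i) :
    ∀ m z, S z → g z ≤ z → (∑ i, (z i - c i).toNat) ≤ m →
      ∃ w, S w ∧ g w = w ∧ w ≤ z := by
  intro m
  induction m with
  | zero =>
    intro z hz hzg hsum
    refine ⟨z, hz, ?_, le_refl z⟩
    have hsum0 : ∀ i, (z i - c i).toNat = 0 := by
      intro i
      exact Finset.sum_eq_zero_iff.mp (Nat.le_zero.mp hsum) i (Finset.mem_univ i)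
    funext i
    have h1 : g z i ≤ z i := hzg i
    have h2 : c i ≤ g z i := hlb (g z) (hSg z hz) i
    have h3 := hsum0 i
    omega
  | succ m ih =>
    intro z hz hzg hsum
    by_cases hfix : g z = z
    · exact ⟨z, hz, hfix, le_refl z⟩
    · have hi : ∃ i, z i ≠ g z i := by
        by_contra h
        push_neg at h
        exact hfix (funext fun i => (h i).symm)
      obtain ⟨i, hi⟩ := hi
      have hdec : (∑ j, (g z j - c j).toNat) < ∑ j, (z j - c j).toNat := by
        apply Finset.sum_lt_sum
        · intro j _
          have : g z j ≤ z j := hzg j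
          omega
        · refine ⟨i, Finset.mem_univ i, ?_⟩
          have h1 : g z i ≤ z i := hzg i
          have h2 : c i ≤ g z i := hlb (g z) (hSg z hz) i
          omega
      obtain ⟨w, hw, hfw, hgzw⟩ := ih (g z) (hSg z hz)
        (hgmono (g z) z (hSg z hz) hz hzg) (by omega)
      exact ⟨w, hw, hfw, le_trans hgzw hzg⟩

/-- Fixed points of the sub-instances `f^x` and `f^x̃` on neighbouring slices
(`x ≤ x̃`, `‖x̃ − x‖∞ = 1`) come in nearby comparable pairs. -/
theorem subslice_fixed_point_properties (d1 d2 n : ℕ) (hn : 1 ≤ n)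
    (f : (Fin d1 → ℤ) × (Fin d2 → ℤ) → (Fin d1 → ℤ) × (Fin d2 → ℤ))
    (hrange : ∀ u, inGridP n u → inGridP n (f u))
    (hmono : ∀ u v, inGridP n u → inGridP n v → u ≤ v → f u ≤ f v)
    (hnonexp : ∀ u v, inGridP n u → inGridP n v → linfP (f u) (f v) ≤ linfP u v)
    (hunit : ∀ u, inGridP n u → linfP (f u) u ≤ 1)
    (x xt : Fin d1 → ℤ) (hx : inGrid n x) (hxt : inGrid n xt)
    (hle : x ≤ xt) (hdist : linf xt x = 1) :
    -- (a) a fixed point of f^x has a fixed point of f^x̃ above it, at distance ≤ 1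
    (∀ y : Fin d2 → ℤ, inGrid n y → (f (x, y)).2 = y →
      ∃ yt : Fin d2 → ℤ, inGrid n yt ∧ (f (xt, yt)).2 = yt ∧
        y ≤ yt ∧ linf yt y ≤ 1) ∧
    -- (b) a fixed point of f^x̃ has a fixed point of f^x below it, at distance ≤ 1
    (∀ yt : Fin d2 → ℤ, inGrid n yt → (f (xt, yt)).2 = yt →
      ∃ y : Fin d2 → ℤ, inGrid n y ∧ (f (x, y)).2 = y ∧
        y ≤ yt ∧ linf yt y ≤ 1) := by
  constructor
  · -- (a)
    intro y hy hfix
    set g : (Fin d2 → ℤ) → (Fin d2 → ℤ) := fun z => (f (xt, z)).2 with hg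
    set S : (Fin d2 → ℤ) → Prop :=
      fun z => inGrid n z ∧ y ≤ z ∧ ∀ i, z i ≤ y i + 1 with hS
    have hgridy : inGridP n (x, y) := ⟨hx, hy⟩
    have hSy : S y := ⟨hy, le_refl y, fun i => by omega⟩
    have hyg : y ≤ g y := by
      have h := (hmono (x, y) (xt, y) hgridy ⟨hxt, hy⟩
        (Prod.mk_le_mk.mpr ⟨hle, le_refl y⟩)).2
      rw [hfix] at h
      exact h
    have hSg : ∀ z, S z → S (g z) := by
      intro z hz
      have hgrid : inGridP n (xt, z) := ⟨hxt, hz.1⟩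
      have hne : linfP (f (xt, z)) (f (x, y)) ≤ 1 := by
        refine le_trans (hnonexp _ _ hgrid hgridy) ?_
        show max (linf xt x) (linf z y) ≤ 1
        refine max_le (le_of_eq hdist) ?_
        rw [linf_le_iff]
        intro i
        have h1 : y i ≤ z i := hz.2.1 i
        have h2 : z i ≤ y i + 1 := hz.2.2 i
        omega
      have hnear : linf (g z) y ≤ 1 := by
        have h := le_trans (le_max_right (linf (f (xt, z)).1 (f (x, y)).1) _) hne
        rw [hfix] at h
        exact h
      refine ⟨(hrange _ hgrid).2, ?_, ?_⟩
      · exact le_trans hyg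
          ((hmono (xt, y) (xt, z) ⟨hxt, hy⟩ hgrid
            (Prod.mk_le_mk.mpr ⟨le_refl xt, hz.2.1⟩)).2)
      · intro i
        have h := (linf_le_iff _ _ _).mp hnear i
        omega
    have hgmono : ∀ z w, S z → S w → z ≤ w → g z ≤ g w := by
      intro z w hz hw hzw
      exact (hmono (xt, z) (xt, w) ⟨hxt, hz.1⟩ ⟨hxt, hw.1⟩
        (Prod.mk_le_mk.mpr ⟨le_refl xt, hzw⟩)).2
    obtain ⟨w, hw, hfw, hyw⟩ := aux_up d2 g (fun i => y i + 1) S hSg hgmono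
      (fun z hz i => hz.2.2 i) (∑ i, ((y i + 1) - y i).toNat) y hSy hyg (le_refl _)
    refine ⟨w, hw.1, hfw, hyw, ?_⟩
    rw [linf_le_iff]
    intro i
    have h1 : y i ≤ w i := hyw i
    have h2 : w i ≤ y i + 1 := hw.2.2 i
    omega
  · -- (b)
    intro yt hyt hfix
    set g : (Fin d2 → ℤ) → (Fin d2 → ℤ) := fun z => (f (x, z)).2 with hg
    set S : (Fin d2 → ℤ) → Prop :=
      fun z => inGrid n z ∧ z ≤ yt ∧ ∀ i, yt i - 1 ≤ z i with hS
    have hgridy : inGridP n (xt, yt) := ⟨hxt, hyt⟩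
    have hSy : S yt := ⟨hyt, le_refl yt, fun i => by omega⟩
    have hyg : g yt ≤ yt := by
      have h := (hmono (x, yt) (xt, yt) ⟨hx, hyt⟩ hgridy
        (Prod.mk_le_mk.mpr ⟨hle, le_refl yt⟩)).2
      rw [hfix] at h
      exact h
    have hSg : ∀ z, S z → S (g z) := by
      intro z hz
      have hgrid : inGridP n (x, z) := ⟨hx, hz.1⟩
      have hne : linfP (f (x, z)) (f (xt, yt)) ≤ 1 := by
        refine le_trans (hnonexp _ _ hgrid hgridy) ?_
        show max (linf x xt) (linf z yt) ≤ 1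
        rw [linf_comm x xt]
        refine max_le (le_of_eq hdist) ?_
        rw [linf_le_iff]
        intro i
        have h1 : z i ≤ yt i := hz.2.1 i
        have h2 : yt i - 1 ≤ z i := hz.2.2 i
        omega
      have hnear : linf (g z) yt ≤ 1 := by
        have h := le_trans (le_max_right (linf (f (x, z)).1 (f (xt, yt)).1) _) hne
        rw [hfix] at h
        exact h
      refine ⟨(hrange _ hgrid).2, ?_, ?_⟩
      · exact le_trans
          ((hmono (x, z) (x, yt) hgrid ⟨hx, hyt⟩
            (Prod.mk_le_mk.mpr ⟨le_refl x, hz.2.1⟩)).2) hyg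
      · intro i
        have h := (linf_le_iff _ _ _).mp hnear i
        omega
    have hgmono : ∀ z w, S z → S w → z ≤ w → g z ≤ g w := by
      intro z w hz hw hzw
      exact (hmono (x, z) (x, w) ⟨hx, hz.1⟩ ⟨hx, hw.1⟩
        (Prod.mk_le_mk.mpr ⟨le_refl x, hzw⟩)).2
    obtain ⟨w, hw, hfw, hyw⟩ := aux_down d2 g (fun i => yt i - 1) S hSg hgmono
      (fun z hz i => hz.2.2 i) (∑ i, (yt i - (yt i - 1)).toNat) yt hSy hyg (le_refl _)
    refine ⟨w, hw.1, hfw, hyw, ?_⟩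
    rw [linf_le_iff]
    intro i
    have h1 : w i ≤ yt i := hyw i
    have h2 : yt i - 1 ≤ w i := hw.2.2 i
    omega
end

section
/- Let G = {1,…,n}^3 and let f : G → G be non-expansive in ℓ∞. Fix c with 1 ≤ c ≤ n, and let v^1, …, v^k (k ≥ 1) be points of G all satisfying v^i_3 = c, f_1(v^i) = v^i_1, and f_2(v^i) = v^i_2, with ‖v^{i+1} − v^i‖∞ = 1 for every i < k. If v^1_3 ≥ f_3(v^1) and v^k_3 ≤ f_3(v^k), then there exists an index i with f(v^i) = v^i. -/
/-- Membership in the grid `{1, …, n}^3 ⊆ ℤ^3`. -/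
def inGrid3 (n : ℕ) (x : Fin 3 → ℤ) : Prop :=
  ∀ i, 1 ≤ x i ∧ x i ≤ (n : ℤ)

/-- The ℓ∞ distance `‖x − y‖∞ = max_i |x_i − y_i|` (as a natural number). -/
def linf3 (x y : Fin 3 → ℤ) : ℕ :=
  Finset.univ.sup fun i => (x i - y i).natAbs

lemma coord_le_linf3 (x y : Fin 3 → ℤ) (j : Fin 3) :
    (x j - y j).natAbs ≤ linf3 x y :=
  Finset.le_sup (f := fun i => (x i - y i).natAbs) (Finset.mem_univ j)

/-- A path of two-dimensional fixed points of the slice `{z : z_3 = c}` with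
consecutive points at ℓ∞ distance 1, whose first point moves weakly down and
whose last point moves weakly up in dimension 3, contains a global fixed
point. -/
theorem path_contains_fixed_point (n : ℕ) (hn : 1 ≤ n)
    (f : (Fin 3 → ℤ) → (Fin 3 → ℤ))
    (hrange : ∀ x, inGrid3 n x → inGrid3 n (f x))
    (hnonexp : ∀ x y, inGrid3 n x → inGrid3 n y → linf3 (f x) (f y) ≤ linf3 x y)
    (c : ℤ) (hc1 : 1 ≤ c) (hcn : c ≤ (n : ℤ))
    (k : ℕ) (hk : 1 ≤ k) (v : ℕ → Fin 3 → ℤ)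
    (hv : ∀ i < k, inGrid3 n (v i) ∧ v i 2 = c ∧
      f (v i) 0 = v i 0 ∧ f (v i) 1 = v i 1)
    (hstep : ∀ i, i + 1 < k → linf3 (v (i + 1)) (v i) = 1)
    (hfirst : f (v 0) 2 ≤ v 0 2)
    (hlast : v (k - 1) 2 ≤ f (v (k - 1)) 2) :
    ∃ i < k, f (v i) = v i := by
  set g : ℕ → ℤ := fun i => f (v i) 2 - v i 2 with hg
  -- step bound
  have step : ∀ i, i + 1 < k → (g (i + 1) - g i).natAbs ≤ 1 := by
    intro i hi
    have hvi := hv i (Nat.lt_of_succ_lt hi)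
    have hvi1 := hv (i + 1) hi
    have hc2 : v (i + 1) 2 = v i 2 := by rw [hvi1.2.1, hvi.2.1]
    have heq : g (i + 1) - g i = f (v (i + 1)) 2 - f (v i) 2 := by
      simp only [hg]; rw [hc2]; ring
    rw [heq]
    calc (f (v (i + 1)) 2 - f (v i) 2).natAbs
        ≤ linf3 (f (v (i + 1))) (f (v i)) := coord_le_linf3 _ _ 2
      _ ≤ linf3 (v (i + 1)) (v i) := hnonexp _ _ hvi1.1 hvi.1
      _ = 1 := hstep i hi
  -- discrete IVT: find least index with 0 ≤ g
  have hP : ∃ m, 0 ≤ g m ∧ m < k := by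
    refine ⟨k - 1, ?_, Nat.sub_lt hk one_pos⟩
    simpa [hg] using hlast
  classical
  obtain ⟨hgm, hmk⟩ := Nat.find_spec hP
  set m := Nat.find hP with hm
  have hgm0 : g m = 0 := by
    rcases Nat.eq_zero_or_pos m with h0 | h0
    · have h1 : g 0 ≤ 0 := by simpa [hg] using hfirst
      rw [h0]; rw [h0] at hgm; omega
    · obtain ⟨j, hj⟩ := Nat.exists_eq_add_of_lt h0
      have hjm : j < m := by omega
      have hjk : j + 1 < k := by omega
      have hmin := Nat.find_min hP hjm
      push_neg at hmin
      have hgj : g j < 0 := by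
        by_contra h
        exact absurd (hmin (le_of_not_gt h)) (by omega)
      have hs := step j hjk
      have hmj : m = j + 1 := by omega
      rw [hmj] at hgm ⊢
      omega
  refine ⟨m, hmk, funext fun j => ?_⟩
  have hvm := hv m hmk
  fin_cases j
  · exact hvm.2.2.1
  · exact hvm.2.2.2
  · show f (v m) 2 = v m 2
    simp only [hg] at hgm0
    omega
end
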